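/- arXiv:1604.06568 — 2 statements merged into one kernel-verified Lean document; each statement's English description precedes it below -/
import Mathlib

section
/- Suppose the neighborhood system on the finite sample space 𝒴 is determined by the undirected graph G = (𝒴, E), and let 𝒴₀ ⊆ 𝒴 be a subset such that ⋃_{y∈𝒴₀} b(y) = 𝒴. Define the graph G₀' = (𝒴₀, E₀') by (y, y') ∈ E₀' if and only if y ≠ y' and b(y) ∩ b(y') ≠ ∅. Fix γ > 0 and suppose every local potential φ_y (y ∈ 𝒴₀) is the local pseudo-spherical potential φ_y(f) = (Σ_{z∈b(y)} f_z^{1+γ})^{1/(1+γ)}. If G₀' is connected, then the composite local Bregman divergence D_Φ satisfies the coincidence axiom on 𝒫: for all p, q ∈ 𝒫, D_Φ(p, q) = 0 implies p = q. -/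
open scoped BigOperators

noncomputable def bregman {A : Type*} [Fintype A] [DecidableEq A]
    (φ : (A → ℝ) → ℝ) (f g : A → ℝ) : ℝ :=
  φ f - φ g - ∑ a, fderiv ℝ φ g (Pi.single a 1) * (f a - g a)

def posOrth (A : Type*) : Set (A → ℝ) := {g | ∀ a, 0 < g a}

def probSet (Y : Type*) [Fintype Y] : Set (Y → ℝ) :=
  {p | (∀ y, 0 < p y) ∧ ∑ y, p y = 1}

noncomputable def DPhi {Y : Type*} [Fintype Y] [DecidableEq Y]
    (G : SimpleGraph Y) [DecidableRel G.Adj] (Y0 : Finset Y)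
    (φ : ∀ y : Y, (↥(G.neighborSet y) → ℝ) → ℝ) (f g : Y → ℝ) : ℝ :=
  ∑ y ∈ Y0, f y * bregman (φ y) (fun z => f z.1 / f y) (fun z => g z.1 / g y)

def nbd {Y : Type*} (G : SimpleGraph Y) (y : Y) : Set Y := insert y (G.neighborSet y)

/-- Graph `G₀` on a vertex subset: edges when closed neighborhoods intersect. -/
def overlapGraph {Y : Type*} (G : SimpleGraph Y) (Y0 : Set Y) : SimpleGraph Y0 where
  Adj a b := a ≠ b ∧ (nbd G a.1 ∩ nbd G b.1).Nonempty
  symm := ⟨by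
    intro a b h
    exact ⟨h.1.symm, by rw [Set.inter_comm]; exact h.2⟩⟩
  loopless := ⟨fun a h => h.1 rfl⟩

/-- Graph `G₀'` on a vertex subset: edges when open neighborhoods intersect. -/
def bOverlapGraph {Y : Type*} (G : SimpleGraph Y) (Y0 : Set Y) : SimpleGraph Y0 where
  Adj a b := a ≠ b ∧ (G.neighborSet a.1 ∩ G.neighborSet b.1).Nonempty
  symm := ⟨by
    intro a b h
    exact ⟨h.1.symm, by rw [Set.inter_comm]; exact h.2⟩⟩
  loopless := ⟨fun a h => h.1 rfl⟩

noncomputable def psPot (γ : ℝ) {A : Type*} [Fintype A] (f : A → ℝ) : ℝ :=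
  (∑ a, f a ^ (1 + γ)) ^ (1 / (1 + γ))

/-! Write `x = f / g` and let `w = escort γ g` be the weights `g ^ (1 + γ) / ∑ g ^ (1 + γ)`.
The Bregman divergence of the pseudo-spherical potential is `psPot γ g` times the gap between
the `(1 + γ)`-power mean and the arithmetic mean of `x` under `w`, so by strict convexity of
`t ↦ t ^ (1 + γ)` it is nonnegative and vanishes only when `f / g` is constant. Hence
`D_Φ(p, q) = 0` forces `p / q` to be constant on every `b(y)`, `y ∈ 𝒴₀`; neighbourhoods adjacent
in `G₀'` overlap, so connectivity makes these constants agree, the `b(y)` cover `𝒴`, and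
`∑ p = ∑ q = 1` makes the common constant `1`. -/

theorem Real.eq_of_arith_mean_eq_rpow_mean {ι : Type*} (s : Finset ι) (w z : ι → ℝ)
    (hw : ∀ i ∈ s, 0 < w i) (hw' : ∑ i ∈ s, w i = 1) (hz : ∀ i ∈ s, 0 ≤ z i) {p : ℝ}
    (hp : 1 < p) (h : ∑ i ∈ s, w i * z i = (∑ i ∈ s, w i * z i ^ p) ^ (1 / p)) :
    ∀ i ∈ s, ∀ j ∈ s, z i = z j := by
  have hpow : (∑ i ∈ s, w i * z i) ^ p = ∑ i ∈ s, w i * z i ^ p := by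
    rw [h, one_div, Real.rpow_inv_rpow (Finset.sum_nonneg fun i hi =>
      mul_nonneg (hw i hi).le (Real.rpow_nonneg (hz i hi) _)) (by linarith)]
  have hconst := ((strictConvexOn_rpow hp).map_sum_eq_iff hw hw' hz).mp (by simpa using hpow)
  intro i hi j hj
  rw [hconst i hi, hconst j hj]

section PseudoSpherical

variable {A : Type*} [Fintype A] {γ : ℝ}

noncomputable def escort (γ : ℝ) (g : A → ℝ) (a : A) : ℝ :=
  g a ^ (1 + γ) / ∑ b, g b ^ (1 + γ)

lemma sum_rpow_pos [Nonempty A] {g : A → ℝ} (hg : ∀ a, 0 < g a) (r : ℝ) :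
    0 < ∑ a, g a ^ r :=
  Finset.sum_pos (fun a _ => Real.rpow_pos_of_pos (hg a) r) Finset.univ_nonempty

lemma escort_pos [Nonempty A] {g : A → ℝ} (hg : ∀ a, 0 < g a) (a : A) : 0 < escort γ g a :=
  div_pos (Real.rpow_pos_of_pos (hg a) _) (sum_rpow_pos hg _)

lemma sum_escort [Nonempty A] {g : A → ℝ} (hg : ∀ a, 0 < g a) : ∑ a, escort γ g a = 1 := by
  simp only [escort]
  rw [← Finset.sum_div, div_self (sum_rpow_pos hg _).ne']

lemma fderiv_psPot_apply_single [DecidableEq A] [Nonempty A] (hγ : 1 + γ ≠ 0) {g : A → ℝ}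
    (hg : ∀ a, 0 < g a) (a : A) :
    fderiv ℝ (psPot γ) g (Pi.single a 1) =
      (∑ b, g b ^ (1 + γ)) ^ (1 / (1 + γ) - 1) * g a ^ γ := by
  have hinner : HasFDerivAt (fun f : A → ℝ => ∑ b, f b ^ (1 + γ))
      (∑ b, ((1 + γ) * g b ^ γ) • ContinuousLinearMap.proj (R := ℝ) (φ := fun _ : A => ℝ) b)
      g := by
    refine HasFDerivAt.fun_sum fun b _ => ?_
    have h := Real.hasDerivAt_rpow_const (p := 1 + γ) (Or.inl (hg b).ne')
    rw [add_sub_cancel_left] at h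
    exact h.comp_hasFDerivAt g (hasFDerivAt_apply (𝕜 := ℝ) (F' := fun _ : A => ℝ) b g)
  have houter := Real.hasDerivAt_rpow_const (p := 1 / (1 + γ))
    (Or.inl (sum_rpow_pos hg (1 + γ)).ne')
  have hφ := houter.comp_hasFDerivAt g hinner
  rw [show psPot γ = (fun x : ℝ => x ^ (1 / (1 + γ))) ∘ fun f : A → ℝ => ∑ b, f b ^ (1 + γ)
    from rfl, hφ.fderiv]
  simp only [FunLike.coe_smul, FunLike.coe_sum, Pi.smul_apply, Finset.sum_apply,
    ContinuousLinearMap.proj_apply, smul_eq_mul, Pi.single_apply, mul_ite, mul_one, mul_zero,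
    Finset.sum_ite_eq', Finset.mem_univ, if_true]
  field_simp

lemma bregman_psPot_eq [DecidableEq A] [Nonempty A] (hγ : 1 + γ ≠ 0) {f g : A → ℝ}
    (hf : ∀ a, 0 ≤ f a) (hg : ∀ a, 0 < g a) :
    bregman (psPot γ) f g = psPot γ g *
      ((∑ a, escort γ g a * (f a / g a) ^ (1 + γ)) ^ (1 / (1 + γ)) -
        ∑ a, escort γ g a * (f a / g a)) := by
  have hS := sum_rpow_pos hg (1 + γ)
  have hpow_mean : ∑ a, escort γ g a * (f a / g a) ^ (1 + γ) =
      (∑ a, f a ^ (1 + γ)) / ∑ a, g a ^ (1 + γ) := by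
    rw [Finset.sum_div]
    refine Finset.sum_congr rfl fun a _ => ?_
    have hga := (Real.rpow_pos_of_pos (hg a) (1 + γ)).ne'
    rw [escort, Real.div_rpow (hf a) (hg a).le]
    field_simp
  have hmean : ∑ a, escort γ g a * (f a / g a) =
      (∑ a, g a ^ γ * f a) / ∑ a, g a ^ (1 + γ) := by
    rw [Finset.sum_div]
    refine Finset.sum_congr rfl fun a _ => ?_
    rw [escort, add_comm, Real.rpow_add_one (hg a).ne']
    field_simp [(hg a).ne']
  have hlin : ∑ a, (∑ b, g b ^ (1 + γ)) ^ (1 / (1 + γ) - 1) * g a ^ γ * (f a - g a) =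
      (∑ b, g b ^ (1 + γ)) ^ (1 / (1 + γ) - 1) * (∑ a, g a ^ γ * f a - ∑ b, g b ^ (1 + γ)) := by
    have hgg : ∀ a, g a ^ γ * g a = g a ^ (1 + γ) := fun a => by
      rw [add_comm, Real.rpow_add_one (hg a).ne']
    simp only [mul_assoc, mul_sub, hgg, ← Finset.mul_sum, Finset.sum_sub_distrib]
  rw [bregman]
  simp only [fderiv_psPot_apply_single hγ hg]
  rw [hlin, hpow_mean, hmean, psPot, psPot,
    Real.div_rpow (Finset.sum_nonneg fun a _ => Real.rpow_nonneg (hf a) _) hS.le,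
    Real.rpow_sub_one hS.ne']
  have hSc := (Real.rpow_pos_of_pos hS (1 / (1 + γ))).ne'
  field_simp
  ring

lemma bregman_psPot_nonneg [DecidableEq A] (hγ : 0 ≤ γ) {f g : A → ℝ} (hf : ∀ a, 0 ≤ f a)
    (hg : ∀ a, 0 < g a) : 0 ≤ bregman (psPot γ) f g := by
  rcases isEmpty_or_nonempty A with hA | hA
  · simp [bregman, psPot]
  rw [bregman_psPot_eq (by linarith) hf hg]
  refine mul_nonneg (Real.rpow_nonneg (sum_rpow_pos hg _).le _) (sub_nonneg.2 ?_)
  exact Real.arith_mean_le_rpow_mean _ _ _ (fun a _ => (escort_pos hg a).le) (sum_escort hg)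
    (fun a _ => div_nonneg (hf a) (hg a).le) (by linarith)

lemma div_eq_div_of_bregman_psPot_eq_zero [DecidableEq A] (hγ : 0 < γ) {f g : A → ℝ}
    (hf : ∀ a, 0 ≤ f a) (hg : ∀ a, 0 < g a) (h : bregman (psPot γ) f g = 0) (a b : A) :
    f a / g a = f b / g b := by
  have : Nonempty A := ⟨a⟩
  rw [bregman_psPot_eq (by linarith) hf hg] at h
  have hpos : 0 < psPot γ g := Real.rpow_pos_of_pos (sum_rpow_pos hg _) _
  have hmean := sub_eq_zero.1 ((mul_eq_zero.1 h).resolve_left hpos.ne')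
  exact Real.eq_of_arith_mean_eq_rpow_mean Finset.univ _ (fun a => f a / g a)
    (fun a _ => escort_pos hg a) (sum_escort hg) (fun a _ => div_nonneg (hf a) (hg a).le)
    (by linarith) hmean.symm a (Finset.mem_univ a) b (Finset.mem_univ b)

end PseudoSpherical

theorem apply_eq_of_bOverlapGraph_preconnected {Y β : Type*} {G : SimpleGraph Y} {Y0 : Set Y}
    (hconn : (bOverlapGraph G Y0).Preconnected) {ρ : Y → β}
    (hloc : ∀ y ∈ Y0, ∀ a ∈ G.neighborSet y, ∀ b ∈ G.neighborSet y, ρ a = ρ b) {a b : Y}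
    (ha : a ∈ ⋃ y ∈ Y0, G.neighborSet y) (hb : b ∈ ⋃ y ∈ Y0, G.neighborSet y) : ρ a = ρ b := by
  suffices hwalk : ∀ {u v : Y0}, (bOverlapGraph G Y0).Walk u v →
      ∀ a ∈ G.neighborSet u, ∀ b ∈ G.neighborSet v, ρ a = ρ b by
    obtain ⟨u, hu, hau⟩ := Set.mem_iUnion₂.1 ha
    obtain ⟨v, hv, hbv⟩ := Set.mem_iUnion₂.1 hb
    obtain ⟨w⟩ := hconn ⟨u, hu⟩ ⟨v, hv⟩
    exact hwalk w a hau b hbv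
  intro u v w
  induction w with
  | nil => exact hloc _ (Subtype.prop _)
  | @cons u m _ hadj _ ih =>
    intro a ha b hb
    obtain ⟨c, hcu, hcm⟩ := hadj.2
    exact (hloc u u.2 a ha c hcu).trans (ih c hcm b hb)

theorem eq_of_div_eq_div_of_sum_eq {Y : Type*} [Fintype Y] {p q : Y → ℝ}
    (hpq : ∀ a b, p a / q a = p b / q b) (hq : ∀ y, q y ≠ 0) (hsum : ∑ y, p y = ∑ y, q y)
    (hq_sum : ∑ y, q y ≠ 0) : p = q := by
  funext z
  have hprop : ∀ y, p y = p z / q z * q y := fun y => by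
    rw [hpq z y, div_mul_cancel₀ _ (hq y)]
  have hk : p z / q z * ∑ y, q y = ∑ y, q y := by
    rw [Finset.mul_sum, ← hsum, Finset.sum_congr rfl fun y _ => hprop y]
  exact (div_eq_one_iff_eq (hq z)).1 ((mul_eq_right₀ hq_sum).1 hk)

/-- If the open neighborhoods `b(y), y ∈ 𝒴₀` cover `𝒴` and the graph `G₀'`
(edges: `b(y) ∩ b(y') ≠ ∅`) is connected, then the composite local Bregman divergence built
from local pseudo-spherical potentials satisfies the coincidence axiom on `𝒫`. -/
theorem stmt3 {Y : Type*} [Fintype Y] [DecidableEq Y]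
    (G : SimpleGraph Y) [DecidableRel G.Adj] (Y0 : Finset Y)
    (γ : ℝ) (hγ : 0 < γ)
    (hcover : (⋃ y ∈ Y0, G.neighborSet y) = Set.univ)
    (hconn : (bOverlapGraph G (Y0 : Set Y)).Connected)
    (p q : Y → ℝ) (hp : p ∈ probSet Y) (hq : q ∈ probSet Y)
    (h : DPhi G Y0 (fun y => psPot γ (A := ↥(G.neighborSet y))) p q = 0) : p = q := by
  obtain ⟨hp_pos, hp_sum⟩ := hp
  obtain ⟨hq_pos, hq_sum⟩ := hq
  rw [DPhi] at h
  have hlocal : ∀ y ∈ Y0, bregman (psPot γ) (fun z : G.neighborSet y => p z / p y)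
      (fun z => q z / q y) = 0 := by
    have hterms := (Finset.sum_eq_zero_iff_of_nonneg fun y _ => mul_nonneg (hp_pos y).le
      (bregman_psPot_nonneg hγ.le (fun z : G.neighborSet y => (div_pos (hp_pos z) (hp_pos y)).le)
        fun z => div_pos (hq_pos z) (hq_pos y))).1 h
    exact fun y hy => (mul_eq_zero.1 (hterms y hy)).resolve_left (hp_pos y).ne'
  have hratio : ∀ y ∈ (Y0 : Set Y), ∀ a ∈ G.neighborSet y, ∀ b ∈ G.neighborSet y,
      p a / q a = p b / q b := by
    intro y hy a ha b hb
    have hab := div_eq_div_of_bregman_psPot_eq_zero hγ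
      (fun z : G.neighborSet y => (div_pos (hp_pos z) (hp_pos y)).le)
      (fun z : G.neighborSet y => div_pos (hq_pos z) (hq_pos y))
      (hlocal y hy) ⟨a, ha⟩ ⟨b, hb⟩
    rwa [div_div_div_comm, div_div_div_comm (p b),
      div_left_inj' (div_pos (hp_pos y) (hq_pos y)).ne'] at hab
  exact eq_of_div_eq_div_of_sum_eq
    (fun a b => apply_eq_of_bOverlapGraph_preconnected hconn.preconnected hratio
      (hcover ▸ Set.mem_univ a) (hcover ▸ Set.mem_univ b))
    (fun y => (hq_pos y).ne') (hp_sum.trans hq_sum.symm) (hq_sum ▸ one_ne_zero)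
end

section
/- Let φ : ℱ → ℝ be a differentiable, convex, and 1-homogeneous function (φ(λf) = λφ(f) for all λ > 0, f ∈ ℱ), and define S(y, f) = −∂_y φ(f). Then S is a proper homogeneous score: S(y, λf) = S(y, f) for all λ > 0, the expected score satisfies S(p, q) ≥ S(p, p) for all p, q ∈ 𝒫, and φ(p) = −S(p, p) = −Σ_{y∈𝒴} p_y S(y, p) for p ∈ 𝒫, i.e. φ is the potential of S. -/
/-!
Euler's identity `φ q = ∇φ(q) · q` turns the supporting-hyperplane inequality of the convex
function `φ`, `φ p ≥ φ q + ∇φ(q) · (p - q)`, into `∇φ(q) · p ≤ φ p = ∇φ(p) · p`, which is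
propriety of `S = -∇φ`. Differentiating `φ (λ • g) = λ * φ g` in `g` shows that `∇φ` is
`0`-homogeneous.
-/

open Filter Topology

section Calculus

variable {E : Type*} [NormedAddCommGroup E] [NormedSpace ℝ E] {φ : E → ℝ} {φ' : E →L[ℝ] ℝ}

theorem HasFDerivAt.apply_self_eq_of_homogeneous {f : E} (hφ : HasFDerivAt φ φ' f)
    (hhom : ∀ t : ℝ, 0 < t → φ (t • f) = t * φ f) : φ' f = φ f := by
  have hray : HasDerivAt (fun t : ℝ => φ (t • f)) (φ' f) 1 := by
    have hφ1 : HasFDerivAt φ φ' ((1 : ℝ) • f) := by rwa [one_smul]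
    exact hφ1.comp_hasDerivAt 1 (by simpa using (hasDerivAt_id (1 : ℝ)).smul_const f)
  have hlin : (fun t : ℝ => φ (t • f)) =ᶠ[𝓝 1] fun t => t * φ f := by
    filter_upwards [Ioi_mem_nhds one_pos] with t ht using hhom t ht
  simpa using (hray.congr_of_eventuallyEq hlin.symm).unique
    ((hasDerivAt_id (1 : ℝ)).mul_const (φ f))

theorem HasFDerivAt.eq_of_eventually_homogeneous {f : E} {c : ℝ} {φ'' : E →L[ℝ] ℝ}
    (hc : c ≠ 0) (hhom : (fun g => φ (c • g)) =ᶠ[𝓝 f] fun g => c * φ g)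
    (hφ : HasFDerivAt φ φ' f) (hφc : HasFDerivAt φ φ'' (c • f)) : φ'' = φ' := by
  have hcomp : HasFDerivAt (fun g => φ (c • g)) (φ''.comp (c • ContinuousLinearMap.id ℝ E)) f :=
    hφc.comp f ((ContinuousLinearMap.id ℝ E).hasFDerivAt.const_smul c)
  have hsmul : c • φ'' = c • φ' := by
    rw [← (hcomp.congr_of_eventuallyEq hhom.symm).unique (hφ.const_smul c)]
    ext v
    simp
  exact smul_right_injective _ hc hsmul

theorem ConvexOn.apply_sub_le_of_hasFDerivAt {s : Set E} {p q : E} (hconv : ConvexOn ℝ s φ)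
    (hp : p ∈ s) (hq : q ∈ s) (hφ : HasFDerivAt φ φ' q) : φ' (p - q) ≤ φ p - φ q := by
  have hline : ConvexOn ℝ ((AffineMap.lineMap q p : ℝ → E) ⁻¹' s) (φ ∘ AffineMap.lineMap q p) :=
    hconv.comp_affineMap _
  have hderiv : HasDerivAt (φ ∘ (AffineMap.lineMap q p : ℝ → E)) (φ' (p - q)) 0 := by
    have hφ0 : HasFDerivAt φ φ' (AffineMap.lineMap q p (0 : ℝ)) := by simpa using hφ
    exact hφ0.comp_hasDerivAt 0 AffineMap.hasDerivAt_lineMap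
  simpa [slope_def_field] using
    hline.le_slope_of_hasDerivAt (by simpa using hq) (by simpa using hp) one_pos hderiv

end Calculus

theorem ContinuousLinearMap.apply_eq_sum_pi_single {ι : Type*} [Fintype ι] [DecidableEq ι]
    (L : (ι → ℝ) →L[ℝ] ℝ) (x : ι → ℝ) : L x = ∑ i, x i * L (Pi.single i 1) := by
  conv_lhs => rw [← Finset.univ_sum_single x]
  simp only [map_sum]
  refine Finset.sum_congr rfl fun i _ => ?_
  rw [← smul_eq_mul, ← map_smul, ← Pi.single_smul, smul_eq_mul, mul_one]

section PosOrth

variable {A : Type*}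

theorem smul_mem_posOrth {c : ℝ} {f : A → ℝ} (hc : 0 < c) (hf : f ∈ posOrth A) :
    c • f ∈ posOrth A :=
  fun a => mul_pos hc (hf a)

theorem isOpen_posOrth [Finite A] : IsOpen (posOrth A) := by
  have : posOrth A = Set.univ.pi fun _ => Set.Ioi 0 := by ext; simp [posOrth]
  rw [this]
  exact isOpen_set_pi Set.finite_univ fun _ _ => isOpen_Ioi

end PosOrth

/-- For a differentiable, convex, positively 1-homogeneous potential `φ`,
the score `S(y, f) = −∂_y φ(f)` is homogeneous (`S(y, λf) = S(y, f)` for `λ > 0`),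
proper (`S(p, q) ≥ S(p, p)` on `𝒫`), and `φ(p) = −S(p,p) = −Σ_y p_y S(y, p)` on `𝒫`. -/
theorem stmt10 {Y : Type*} [Fintype Y] [DecidableEq Y]
    (φ : (Y → ℝ) → ℝ)
    (hdiff : DifferentiableOn ℝ φ (posOrth Y))
    (hconv : ConvexOn ℝ (posOrth Y) φ)
    (hhom : ∀ lam : ℝ, 0 < lam → ∀ f ∈ posOrth Y, φ (lam • f) = lam * φ f) :
    (∀ (y : Y) (lam : ℝ), 0 < lam → ∀ f ∈ posOrth Y,
      -(fderiv ℝ φ (lam • f) (Pi.single y 1)) = -(fderiv ℝ φ f (Pi.single y 1))) ∧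
    (∀ p ∈ probSet Y, ∀ q ∈ probSet Y,
      (∑ y : Y, p y * -(fderiv ℝ φ q (Pi.single y 1)))
        ≥ ∑ y : Y, p y * -(fderiv ℝ φ p (Pi.single y 1))) ∧
    (∀ p ∈ probSet Y,
      φ p = -∑ y : Y, p y * -(fderiv ℝ φ p (Pi.single y 1))) := by
  have hdiffAt : ∀ f ∈ posOrth Y, HasFDerivAt φ (fderiv ℝ φ f) f := fun f hf =>
    (hdiff.differentiableAt (isOpen_posOrth.mem_nhds hf)).hasFDerivAt
  have heuler : ∀ f ∈ posOrth Y, fderiv ℝ φ f f = φ f := fun f hf =>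
    (hdiffAt f hf).apply_self_eq_of_homogeneous fun t ht => hhom t ht f hf
  have hsum : ∀ f g : Y → ℝ, ∑ y, g y * -(fderiv ℝ φ f (Pi.single y 1)) = -fderiv ℝ φ f g :=
    fun f g => by
      rw [ContinuousLinearMap.apply_eq_sum_pi_single (fderiv ℝ φ f) g]
      simp only [mul_neg, Finset.sum_neg_distrib]
  refine ⟨fun y lam hlam f hf => ?_, fun p hp q hq => ?_, fun p hp => ?_⟩
  · have hgrad : fderiv ℝ φ (lam • f) = fderiv ℝ φ f :=
      (hdiffAt f hf).eq_of_eventually_homogeneous hlam.ne'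
        (eventually_of_mem (isOpen_posOrth.mem_nhds hf) fun g hg => hhom lam hlam g hg)
        (hdiffAt _ (smul_mem_posOrth hlam hf))
    rw [hgrad]
  · have hsupport := hconv.apply_sub_le_of_hasFDerivAt hp.1 hq.1 (hdiffAt q hq.1)
    rw [map_sub, heuler q hq.1] at hsupport
    rw [hsum, hsum, ge_iff_le, neg_le_neg_iff, heuler p hp.1]
    linarith
  · rw [hsum, neg_neg, heuler p hp.1]
end
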